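/- arXiv:2407.18885 — 2 statements merged into one kernel-verified Lean document; each statement's English description precedes it below -/
import Mathlib

section
/- Let y ∈ ℝ^d, let Σ and S_t(θ) be positive definite d×d matrices, let θ have prior density p(θ), and let the simulation output vector η(θ) given data D_t be distributed N(μ_t(θ), S_t(θ)). Define the Gaussian likelihood p(y|θ) = f_N(y; η(θ), Σ). Then E[p(y|θ)p(θ) | D_t] = f_N(y; μ_t(θ), Σ + S_t(θ)) p(θ) and Var[p(y|θ)p(θ) | D_t] = [ (2^d π^{d/2} |Σ|^{1/2})^{-1} f_N(y; μ_t(θ), (1/2)Σ + S_t(θ)) − (f_N(y; μ_t(θ), Σ + S_t(θ)))² ] p(θ)². -/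
/-! The product of the two Gaussian densities in `η` is, after completing the square (the Woodbury
identity identifies the remaining quadratic form in the data), a Gaussian density in `y` with
covariance `Σ + S` times a normalised Gaussian density in `η`; integrating out `η` gives
`∫ f_N(y; η, Σ) f_N(η; μ, S) dη = f_N(y; μ, Σ + S)`. The second moment reduces to the same
identity because `f_N(y; η, Σ)²` is a constant multiple of `f_N(y; η, Σ/2)`. -/

open Matrix MeasureTheory

/-- Multivariate normal density on ℝ^d: `fN d C b a` is the density with mean `b`
and covariance `C`, evaluated at `a`. -/
noncomputable def fN (d : ℕ) (C : Matrix (Fin d) (Fin d) ℝ) (b a : Fin d → ℝ) : ℝ :=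
  (2 * Real.pi) ^ (-(d : ℝ) / 2) * C.det ^ (-(1 : ℝ) / 2) *
    Real.exp (-(1 / 2) * ((a - b) ⬝ᵥ (C⁻¹ *ᵥ (a - b))))

namespace Matrix

section IsSymm

variable {n R : Type*} [Fintype n] [CommRing R] {M : Matrix n n R}

theorem IsSymm.dotProduct_mulVec_comm (hM : M.IsSymm) (u v : n → R) :
    u ⬝ᵥ (M *ᵥ v) = v ⬝ᵥ (M *ᵥ u) := by
  rw [dotProduct_mulVec, ← vecMul_transpose, hM.eq, dotProduct_comm]

theorem IsSymm.dotProduct_mulVec_sub_sub (hM : M.IsSymm) (x u : n → R) :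
    (x - u) ⬝ᵥ (M *ᵥ (x - u)) = x ⬝ᵥ (M *ᵥ x) - 2 * (u ⬝ᵥ (M *ᵥ x)) + u ⬝ᵥ (M *ᵥ u) := by
  rw [mulVec_sub, dotProduct_sub, sub_dotProduct, sub_dotProduct, hM.dotProduct_mulVec_comm x u]
  ring

theorem IsSymm.dotProduct_mulVec_sub_inv_mulVec [DecidableEq n] (hM : M.IsSymm)
    (hdet : IsUnit M.det) (u b : n → R) :
    (u - M⁻¹ *ᵥ b) ⬝ᵥ (M *ᵥ (u - M⁻¹ *ᵥ b)) =
      u ⬝ᵥ (M *ᵥ u) - 2 * (u ⬝ᵥ b) + b ⬝ᵥ (M⁻¹ *ᵥ b) := by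
  have hMb : M *ᵥ (M⁻¹ *ᵥ b) = b := by rw [mulVec_mulVec, mul_nonsing_inv _ hdet, one_mulVec]
  rw [hM.dotProduct_mulVec_sub_sub, hM.dotProduct_mulVec_comm (M⁻¹ *ᵥ b), hMb, dotProduct_comm b]

end IsSymm

variable {n : Type*}

theorem PosDef.isSymm {M : Matrix n n ℝ} (hM : M.PosDef) :
    M.IsSymm :=
  isHermitian_iff_isSymm.mp hM.isHermitian

variable [Fintype n] [DecidableEq n]

theorem det_inv_add_inv {K : Type*} [Field K] {V S : Matrix n n K} (hV : IsUnit V.det)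
    (hS : IsUnit S.det) : (V⁻¹ + S⁻¹).det = (V + S).det / (V.det * S.det) := by
  have hfactor : V⁻¹ + S⁻¹ = V⁻¹ * (V + S) * S⁻¹ := by
    rw [Matrix.mul_add, nonsing_inv_mul _ hV, Matrix.add_mul, Matrix.one_mul, Matrix.mul_assoc,
      mul_nonsing_inv _ hS, Matrix.mul_one, add_comm]
  rw [hfactor, det_mul, det_mul, det_nonsing_inv, det_nonsing_inv, Ring.inverse_eq_inv']
  ring

theorem PosDef.dotProduct_inv_mulVec_add_complete_square {V S : Matrix n n ℝ} (hV : V.PosDef)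
    (hS : S.PosDef) (x u : n → ℝ) :
    (x - u) ⬝ᵥ (V⁻¹ *ᵥ (x - u)) + u ⬝ᵥ (S⁻¹ *ᵥ u) =
      x ⬝ᵥ ((V + S)⁻¹ *ᵥ x) +
        (u - (V⁻¹ + S⁻¹)⁻¹ *ᵥ (V⁻¹ *ᵥ x)) ⬝ᵥ
          ((V⁻¹ + S⁻¹) *ᵥ (u - (V⁻¹ + S⁻¹)⁻¹ *ᵥ (V⁻¹ *ᵥ x))) := by
  set P := V⁻¹
  set A := P + S⁻¹
  have hP : P.IsSymm := hV.inv.isSymm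
  have hA : A.PosDef := hV.inv.add hS.inv
  have woodbury : (V + S)⁻¹ = P - P * A⁻¹ * P := by
    simpa [add_comm S⁻¹] using add_mul_mul_inv_eq_sub V 1 S 1 hV.isUnit hS.isUnit
      (by simpa [add_comm] using hA.isUnit)
  have hcross : x ⬝ᵥ ((P * A⁻¹ * P) *ᵥ x) = (P *ᵥ x) ⬝ᵥ (A⁻¹ *ᵥ (P *ᵥ x)) := by
    rw [← mulVec_mulVec, ← mulVec_mulVec, hP.dotProduct_mulVec_comm, dotProduct_comm]
  rw [hA.isSymm.dotProduct_mulVec_sub_inv_mulVec hA.det_pos.ne'.isUnit,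
    hP.dotProduct_mulVec_sub_sub, woodbury, sub_mulVec, dotProduct_sub, hcross, add_mulVec,
    dotProduct_add, hP.dotProduct_mulVec_comm u x]
  ring

end Matrix

section Gaussian

variable {ι : Type*} [Fintype ι]

theorem integral_exp_neg_half_dotProduct_self :
    ∫ y : ι → ℝ, Real.exp (-(1 / 2) * (y ⬝ᵥ y)) = (2 * Real.pi) ^ ((Fintype.card ι : ℝ) / 2) := by
  have hprod : ∀ y : ι → ℝ,
      Real.exp (-(1 / 2) * (y ⬝ᵥ y)) = ∏ i, Real.exp (-(1 / 2) * y i ^ 2) := by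
    intro y
    rw [← Real.exp_sum, dotProduct, Finset.mul_sum]
    simp only [sq]
  simp_rw [hprod]
  rw [integral_fintype_prod_volume_eq_pow (fun t : ℝ => Real.exp (-(1 / 2) * t ^ 2)),
    integral_gaussian, Real.sqrt_eq_rpow, ← Real.rpow_natCast, ← Real.rpow_mul (by positivity)]
  ring_nf

variable [DecidableEq ι]

theorem integral_comp_mulVec {E : Type*} [NormedAddCommGroup E] [NormedSpace ℝ E]
    {B : Matrix ι ι ℝ} (hB : B.det ≠ 0) (f : (ι → ℝ) → E) :
    ∫ x, f (B *ᵥ x) = |B.det|⁻¹ • ∫ y, f y := by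
  have hf : LinearMap.det (toLin' B) ≠ 0 := by rwa [LinearMap.det_toLin']
  let e :=
    ((toLin' B).equivOfDetNeZero hf).toContinuousLinearEquiv.toHomeomorph.toMeasurableEquiv
  have hmap : (volume : Measure (ι → ℝ)).map e = ENNReal.ofReal |B.det⁻¹| • volume := by
    rw [← LinearMap.det_toLin' B]
    exact Real.map_linearMap_volume_pi_eq_smul_volume_pi hf
  calc ∫ x, f (B *ᵥ x) = ∫ x, f (e x) := rfl
    _ = ∫ y, f y ∂(volume.map e) := (integral_map_equiv e f).symm
    _ = |B.det|⁻¹ • ∫ y, f y := by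
      rw [hmap, integral_smul_measure, ENNReal.toReal_ofReal (abs_nonneg _), abs_inv]

open scoped MatrixOrder in
theorem integral_exp_neg_half_dotProduct_mulVec {M : Matrix ι ι ℝ} (hM : M.PosDef) :
    ∫ x : ι → ℝ, Real.exp (-(1 / 2) * (x ⬝ᵥ (M *ᵥ x))) =
      (2 * Real.pi) ^ ((Fintype.card ι : ℝ) / 2) * M.det ^ (-(1 : ℝ) / 2) := by
  obtain ⟨B, rfl⟩ := CStarAlgebra.nonneg_iff_eq_star_mul_self.mp hM.posSemidef.nonneg
  have hdet : (star B * B).det = B.det ^ 2 := by simp [star_eq_conjTranspose, sq]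
  have hB : B.det ≠ 0 := fun h => hM.det_pos.ne' (by rw [hdet, h]; ring)
  have hquad : ∀ x, x ⬝ᵥ ((star B * B) *ᵥ x) = (B *ᵥ x) ⬝ᵥ (B *ᵥ x) := by
    intro x
    rw [← mulVec_mulVec, dotProduct_mulVec, star_eq_conjTranspose,
      conjTranspose_eq_transpose_of_trivial, vecMul_transpose]
  simp_rw [hquad]
  rw [integral_comp_mulVec hB (fun y => Real.exp (-(1 / 2) * (y ⬝ᵥ y))),
    integral_exp_neg_half_dotProduct_self, hdet, smul_eq_mul, ← sq_abs, ← Real.rpow_natCast,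
    ← Real.rpow_mul (abs_nonneg _)]
  norm_num [Real.rpow_neg_one, mul_comm]

end Gaussian

theorem integral_fN {d : ℕ} {C : Matrix (Fin d) (Fin d) ℝ} (hC : C.PosDef) (b : Fin d → ℝ) :
    ∫ a, fN d C b a = 1 := by
  have hdet : 0 < C.det := hC.det_pos
  unfold fN
  rw [integral_const_mul, integral_sub_right_eq_self
      (fun a => Real.exp (-(1 / 2) * (a ⬝ᵥ (C⁻¹ *ᵥ a)))) b,
    integral_exp_neg_half_dotProduct_mulVec hC.inv, det_nonsing_inv, Ring.inverse_eq_inv',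
    Fintype.card_fin, Real.inv_rpow hdet.le, neg_div,
    Real.rpow_neg (by positivity : (0 : ℝ) ≤ 2 * Real.pi)]
  field_simp

theorem fN_mul_fN {d : ℕ} {V S : Matrix (Fin d) (Fin d) ℝ} (hV : V.PosDef) (hS : S.PosDef)
    (y μ η : Fin d → ℝ) :
    fN d V η y * fN d S μ η =
      fN d (V + S) μ y * fN d (V⁻¹ + S⁻¹)⁻¹ (μ + (V⁻¹ + S⁻¹)⁻¹ *ᵥ (V⁻¹ *ᵥ (y - μ))) η := by
  have hA : (V⁻¹ + S⁻¹).PosDef := hV.inv.add hS.inv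
  have hVdet := hV.det_pos
  have hSdet := hS.det_pos
  have hVSdet := (hV.add hS).det_pos
  have hexp : Real.exp (-(1 / 2) * ((y - η) ⬝ᵥ (V⁻¹ *ᵥ (y - η)))) *
        Real.exp (-(1 / 2) * ((η - μ) ⬝ᵥ (S⁻¹ *ᵥ (η - μ)))) =
      Real.exp (-(1 / 2) * ((y - μ) ⬝ᵥ ((V + S)⁻¹ *ᵥ (y - μ)))) *
        Real.exp (-(1 / 2) * ((η - (μ + (V⁻¹ + S⁻¹)⁻¹ *ᵥ (V⁻¹ *ᵥ (y - μ)))) ⬝ᵥ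
          ((V⁻¹ + S⁻¹) *ᵥ (η - (μ + (V⁻¹ + S⁻¹)⁻¹ *ᵥ (V⁻¹ *ᵥ (y - μ))))))) := by
    rw [← Real.exp_add, ← Real.exp_add, ← mul_add, ← mul_add, ← sub_sub_sub_cancel_right y η μ,
      sub_add_eq_sub_sub, hV.dotProduct_inv_mulVec_add_complete_square hS]
  have hdet : V.det ^ (-(1 : ℝ) / 2) * S.det ^ (-(1 : ℝ) / 2) =
      (V + S).det ^ (-(1 : ℝ) / 2) * ((V + S).det / (V.det * S.det))⁻¹ ^ (-(1 : ℝ) / 2) := by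
    rw [Real.inv_rpow (by positivity), Real.div_rpow (by positivity) (by positivity),
      Real.mul_rpow hVdet.le hSdet.le]
    field_simp
  unfold fN
  rw [nonsing_inv_nonsing_inv _ hA.det_pos.ne'.isUnit, det_nonsing_inv, Ring.inverse_eq_inv',
    det_inv_add_inv hVdet.ne'.isUnit hSdet.ne'.isUnit, mul_mul_mul_comm, hexp,
    mul_mul_mul_comm _ (Real.exp _)]
  congr 1
  linear_combination (2 * Real.pi) ^ (-(d : ℝ) / 2) * (2 * Real.pi) ^ (-(d : ℝ) / 2) * hdet

theorem integral_fN_mul_fN {d : ℕ} {V S : Matrix (Fin d) (Fin d) ℝ} (hV : V.PosDef)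
    (hS : S.PosDef) (y μ : Fin d → ℝ) :
    ∫ η, fN d V η y * fN d S μ η = fN d (V + S) μ y := by
  simp_rw [fN_mul_fN hV hS y μ]
  rw [integral_const_mul, integral_fN (hV.inv.add hS.inv).inv, mul_one]

theorem fN_sq {d : ℕ} {V : Matrix (Fin d) (Fin d) ℝ} (hV : V.PosDef) (b a : Fin d → ℝ) :
    fN d V b a ^ 2 = ((2 : ℝ) ^ d * Real.pi ^ ((d : ℝ) / 2) * V.det ^ ((1 : ℝ) / 2))⁻¹ *
      fN d ((1 / 2 : ℝ) • V) b a := by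
  have hdet := hV.det_pos
  have hinv : ((1 / 2 : ℝ) • V)⁻¹ = (2 : ℝ) • V⁻¹ := by
    refine inv_eq_left_inv ?_
    rw [smul_mul_smul_comm, nonsing_inv_mul _ hdet.ne'.isUnit]
    norm_num
  have h2 : (0 : ℝ) ≤ 2 := by norm_num
  have hpow : (2 : ℝ) ^ d = ((2 : ℝ) ^ ((d : ℝ) / 2)) ^ 2 := by
    rw [← Real.rpow_natCast, ← Real.rpow_mul_natCast h2]
    norm_num
  have hhalf : ((1 / 2 : ℝ) ^ d * V.det) ^ (-(1 : ℝ) / 2) =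
      (2 : ℝ) ^ ((d : ℝ) / 2) * V.det ^ (-(1 : ℝ) / 2) := by
    rw [Real.mul_rpow (by positivity) hdet.le, one_div, inv_pow, Real.inv_rpow (by positivity),
      ← Real.rpow_natCast, ← Real.rpow_mul h2, ← Real.rpow_neg h2]
    ring_nf
  have h2π : (2 * Real.pi) ^ (-(d : ℝ) / 2) =
      ((2 : ℝ) ^ ((d : ℝ) / 2) * Real.pi ^ ((d : ℝ) / 2))⁻¹ := by
    rw [neg_div, Real.rpow_neg (by positivity), Real.mul_rpow h2 Real.pi_pos.le]
  have hD : V.det ^ (-(1 : ℝ) / 2) = (V.det ^ ((1 : ℝ) / 2))⁻¹ := by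
    rw [neg_div, Real.rpow_neg hdet.le]
  have hexp : ∀ q : ℝ, Real.exp (-(1 / 2) * (2 * q)) = Real.exp (-(1 / 2) * q) ^ 2 := by
    intro q
    rw [sq, ← Real.exp_add]
    ring_nf
  unfold fN
  rw [hinv, det_smul, Fintype.card_fin, smul_mulVec, dotProduct_smul, smul_eq_mul, hexp, hhalf,
    hpow, h2π, hD]
  field_simp

theorem integral_fN_sq_mul_fN {d : ℕ} {V S : Matrix (Fin d) (Fin d) ℝ} (hV : V.PosDef)
    (hS : S.PosDef) (y μ : Fin d → ℝ) :
    ∫ η, fN d V η y ^ 2 * fN d S μ η =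
      ((2 : ℝ) ^ d * Real.pi ^ ((d : ℝ) / 2) * V.det ^ ((1 : ℝ) / 2))⁻¹ *
        fN d ((1 / 2 : ℝ) • V + S) μ y := by
  simp_rw [fN_sq hV, mul_assoc _ (fN d _ _ _)]
  rw [integral_const_mul, integral_fN_mul_fN (hV.smul (by norm_num)) hS]

/-- Expectations over the emulator output `η ~ N(μt, St)` are integrals against its density. -/
theorem lemma_3_1 (d : ℕ) (V St : Matrix (Fin d) (Fin d) ℝ)
    (hV : V.PosDef) (hSt : St.PosDef) (y μt : Fin d → ℝ) (pθ : ℝ) :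
    (∫ η : Fin d → ℝ, fN d V η y * pθ * fN d St μt η) =
        fN d (V + St) μt y * pθ ∧
      (∫ η : Fin d → ℝ, (fN d V η y * pθ) ^ 2 * fN d St μt η) -
          (∫ η : Fin d → ℝ, fN d V η y * pθ * fN d St μt η) ^ 2 =
        (((2 : ℝ) ^ d * Real.pi ^ ((d : ℝ) / 2) * V.det ^ ((1 : ℝ) / 2))⁻¹ *
            fN d ((1 / 2 : ℝ) • V + St) μt y -
          (fN d (V + St) μt y) ^ 2) * pθ ^ 2 := by
  have hmean : ∫ η, fN d V η y * pθ * fN d St μt η = fN d (V + St) μt y * pθ := by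
    simp_rw [mul_right_comm _ pθ]
    rw [integral_mul_const, integral_fN_mul_fN hV hSt]
  have hsecond : ∫ η, (fN d V η y * pθ) ^ 2 * fN d St μt η =
      ((2 : ℝ) ^ d * Real.pi ^ ((d : ℝ) / 2) * V.det ^ ((1 : ℝ) / 2))⁻¹ *
        fN d ((1 / 2 : ℝ) • V + St) μt y * pθ ^ 2 := by
    simp_rw [mul_pow, mul_right_comm _ (pθ ^ 2)]
    rw [integral_mul_const, integral_fN_sq_mul_fN hV hSt]
  refine ⟨hmean, ?_⟩
  rw [hsecond, hmean]
  ring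
end

section
/- Let Σ, S be positive definite d×d matrices and let Φ be symmetric positive semidefinite with S − Φ positive semidefinite. Then for any y, μ ∈ ℝ^d, (2^d π^{d/2}|Σ + S − Φ|^{1/2})^{-1} f_N(y; μ, (1/2)(Σ + S + Φ)) ≤ (2^d π^{d/2}|Σ|^{1/2})^{-1} f_N(y; μ, (1/2)Σ + S). That is, the expected look-ahead variance of Lemma 3.2 is nonnegative. -/
/-!
Write `P = V + S - Φ`, `Q = V + S + Φ` and `Δ = S - Φ`, so that `V = P - Δ` and
`V + 2S = Q + Δ`. The two covariances are halves of `Q` and `Q + Δ`, so the claim splits into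
a comparison of quadratic forms, `(Q + Δ)⁻¹ ≤ Q⁻¹` (inversion is antitone in the Loewner
order), and the determinant inequality `det (P - Δ) * det (Q + Δ) ≤ det P * det Q`. Writing
`Δ = Rᴴ R` and `H = R P⁻¹ Rᴴ`, the matrix determinant lemma gives
`det (P - Δ) = det P * det (1 - H)` and `det (Q + Δ) = det Q * det (1 + R Q⁻¹ Rᴴ)`, which is at
most `det Q * det (1 + H)`, while `det (1 - H) * det (1 + H) = det (1 - H²) ≤ 1` since
`0 ≤ H ≤ 1`.
-/

open Matrix
open scoped ComplexOrder

namespace Matrix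

variable {n : Type*} [Fintype n]

theorem dotProduct_mulVec_le_of_posSemidef_sub {A B : Matrix n n ℝ} (h : (B - A).PosSemidef)
    (x : n → ℝ) : x ⬝ᵥ (A *ᵥ x) ≤ x ⬝ᵥ (B *ᵥ x) := by
  have := h.dotProduct_mulVec_nonneg x
  rw [star_trivial, sub_mulVec, dotProduct_sub] at this
  linarith

variable [DecidableEq n]

/-- Both sides say that the block matrix `[[A, B], [Bᴴ, D]]` is positive semidefinite. -/
theorem PosDef.posSemidef_sub_mul_inv_mul_conjTranspose_iff {𝕜 m : Type*} [RCLike 𝕜]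
    [Fintype m] [DecidableEq m] {A : Matrix m m 𝕜} {D : Matrix n n 𝕜} (hA : A.PosDef)
    (hD : D.PosDef) (B : Matrix m n 𝕜) :
    (A - B * D⁻¹ * Bᴴ).PosSemidef ↔ (D - Bᴴ * A⁻¹ * B).PosSemidef := by
  have := hA.isUnit.invertible
  have := hD.isUnit.invertible
  rw [← PosDef.fromBlocks₂₂ A B hD, PosDef.fromBlocks₁₁ B D hA]

theorem PosDef.posSemidef_inv_sub_inv {𝕜 : Type*} [RCLike 𝕜] {A B : Matrix n n 𝕜}
    (hA : A.PosDef) (hAB : (B - A).PosSemidef) : (A⁻¹ - B⁻¹).PosSemidef := by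
  have := hA.isUnit.invertible
  have hB : B.PosDef := by simpa using hA.add_posSemidef hAB
  simpa using (hB.posSemidef_sub_mul_inv_mul_conjTranspose_iff hA.inv 1).mp
    (by rwa [one_mul, conjTranspose_one, mul_one, inv_inv_of_invertible])

theorem PosSemidef.one_le_det_one_add {G : Matrix n n ℝ} (hG : G.PosSemidef) :
    1 ≤ (1 + G).det := by
  have hH : (1 + G).IsHermitian := isHermitian_one.add hG.isHermitian
  rw [hH.det_eq_prod_eigenvalues]
  refine Finset.one_le_prod fun i _ => ?_
  rw [hH.eigenvalues_eq, add_mulVec, one_mulVec, dotProduct_add]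
  set v := hH.eigenvectorBasis i
  have hunit : star v ⬝ᵥ v = 1 := by
    rw [dotProduct_comm, ← EuclideanSpace.inner_eq_star_dotProduct, real_inner_self_eq_norm_sq,
      hH.eigenvectorBasis.orthonormal.1 i, one_pow]
  have hquad := hG.dotProduct_mulVec_nonneg v.ofLp
  simp only [star_trivial, RCLike.re_to_real, RCLike.ofReal_real_eq_id, id_eq] at hunit hquad ⊢
  linarith

open scoped MatrixOrder in
theorem PosSemidef.det_le_det_add {A B : Matrix n n ℝ} (hA : A.PosSemidef) (hB : B.PosSemidef) :
    A.det ≤ (A + B).det := by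
  rcases hA.det_nonneg.eq_or_lt with hzero | hpos
  · exact hzero ▸ (hA.add hB).det_nonneg
  have hA' : A.PosDef := hA.posDef_iff_det_ne_zero.mpr hpos.ne'
  obtain ⟨R, rfl⟩ := CStarAlgebra.nonneg_iff_eq_star_mul_self.mp hB.nonneg
  rw [star_eq_conjTranspose, det_add_mul _ _ hA'.det_pos.ne'.isUnit]
  exact le_mul_of_one_le_right hpos.le
    (hA'.inv.posSemidef.mul_mul_conjTranspose_same R).one_le_det_one_add

theorem PosSemidef.det_one_sub_mul_det_one_add_le_one {H : Matrix n n ℝ} (hH : H.PosSemidef)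
    (h1H : (1 - H).PosSemidef) : (1 - H).det * (1 + H).det ≤ 1 := by
  have hsq : (1 - H * H).PosSemidef := by
    -- `H - H² = (1 - H) H (1 - H) + H (1 - H) H`
    have h := h1H.add ((hH.conjTranspose_mul_mul_same (1 - H)).add
      (h1H.conjTranspose_mul_mul_same H))
    rwa [h1H.isHermitian.eq, hH.isHermitian.eq, show (1 - H) + ((1 - H) * H * (1 - H) +
      H * (1 - H) * H) = 1 - H * H by noncomm_ring] at h
  calc (1 - H).det * (1 + H).det = (1 - H * H).det := by
        rw [← det_mul]
        congr 1
        noncomm_ring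
    _ ≤ (1 - H * H + Hᴴ * H).det := hsq.det_le_det_add (posSemidef_conjTranspose_mul_self H)
    _ = 1 := by rw [hH.isHermitian.eq, sub_add_cancel, det_one]

open scoped MatrixOrder in
theorem PosDef.det_sub_mul_det_add_le {P Q Δ : Matrix n n ℝ} (hP : P.PosDef)
    (hQP : (Q - P).PosSemidef) (hΔ : Δ.PosSemidef) (hPΔ : (P - Δ).PosSemidef) :
    (P - Δ).det * (Q + Δ).det ≤ P.det * Q.det := by
  have hQ : Q.PosDef := by simpa using hP.add_posSemidef hQP
  obtain ⟨R, rfl⟩ := CStarAlgebra.nonneg_iff_eq_star_mul_self.mp hΔ.nonneg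
  rw [star_eq_conjTranspose] at hPΔ ⊢
  set H := R * P⁻¹ * Rᴴ
  have hH : H.PosSemidef := hP.inv.posSemidef.mul_mul_conjTranspose_same R
  have h1H : (1 - H).PosSemidef :=
    (hP.posSemidef_sub_mul_inv_mul_conjTranspose_iff PosDef.one Rᴴ).mp (by simpa using hPΔ)
  have hdetP : (P - Rᴴ * R).det = P.det * (1 - H).det := by
    rw [sub_eq_add_neg, ← neg_mul, det_add_mul _ _ hP.det_pos.ne'.isUnit, mul_neg,
      ← sub_eq_add_neg]
  have hdetQ : (Q + Rᴴ * R).det = Q.det * (1 + R * Q⁻¹ * Rᴴ).det :=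
    det_add_mul _ _ hQ.det_pos.ne'.isUnit
  have hmono : (1 + R * Q⁻¹ * Rᴴ).det ≤ (1 + H).det := by
    have hHK : (H - R * Q⁻¹ * Rᴴ).PosSemidef := by
      simpa [H, Matrix.mul_sub, Matrix.sub_mul] using
        (hP.posSemidef_inv_sub_inv hQP).mul_mul_conjTranspose_same R
    simpa using (PosSemidef.one.add
      (hQ.inv.posSemidef.mul_mul_conjTranspose_same R)).det_le_det_add hHK
  have hPQ : 0 ≤ P.det * Q.det := (mul_pos hP.det_pos hQ.det_pos).le
  calc (P - Rᴴ * R).det * (Q + Rᴴ * R).det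
      = P.det * Q.det * ((1 - H).det * (1 + R * Q⁻¹ * Rᴴ).det) := by rw [hdetP, hdetQ]; ring
    _ ≤ P.det * Q.det * ((1 - H).det * (1 + H).det) := by
        gcongr
        exact h1H.det_nonneg
    _ ≤ P.det * Q.det := mul_le_of_le_one_right hPQ (hH.det_one_sub_mul_det_one_add_le_one h1H)

end Matrix

theorem inv_rpow_half_mul_fN_le {d : ℕ} {C₁ C₂ : Matrix (Fin d) (Fin d) ℝ} (hC₁ : C₁.PosDef)
    (hC : (C₂ - C₁).PosSemidef) {a b : ℝ} (ha : 0 < a) (hb : 0 < b)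
    (hdet : b * C₂.det ≤ a * C₁.det) (μ y : Fin d → ℝ) :
    (a ^ (1 / 2 : ℝ))⁻¹ * fN d C₁ μ y ≤ (b ^ (1 / 2 : ℝ))⁻¹ * fN d C₂ μ y := by
  have hC₂ : C₂.PosDef := by simpa using hC₁.add_posSemidef hC
  have hscale : ∀ (c : ℝ) (C : Matrix (Fin d) (Fin d) ℝ), 0 < c → 0 < C.det →
      (c ^ (1 / 2 : ℝ))⁻¹ * fN d C μ y = (2 * Real.pi) ^ (-(d : ℝ) / 2) *
        (c * C.det) ^ (-(1 : ℝ) / 2) * Real.exp (-(1 / 2) * ((y - μ) ⬝ᵥ (C⁻¹ *ᵥ (y - μ)))) := by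
    intro c C hc hC
    rw [fN, Real.mul_rpow hc.le hC.le, show -(1 : ℝ) / 2 = -(1 / 2) by norm_num,
      Real.rpow_neg hc.le]
    ring
  rw [hscale a C₁ ha hC₁.det_pos, hscale b C₂ hb hC₂.det_pos]
  have hfactor : (a * C₁.det) ^ (-(1 : ℝ) / 2) ≤ (b * C₂.det) ^ (-(1 : ℝ) / 2) :=
    Real.rpow_le_rpow_of_nonpos (mul_pos hb hC₂.det_pos) hdet (by norm_num)
  have hquad := dotProduct_mulVec_le_of_posSemidef_sub (hC₁.posSemidef_inv_sub_inv hC) (y - μ)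
  have hexp : Real.exp (-(1 / 2) * ((y - μ) ⬝ᵥ (C₁⁻¹ *ᵥ (y - μ)))) ≤
      Real.exp (-(1 / 2) * ((y - μ) ⬝ᵥ (C₂⁻¹ *ᵥ (y - μ)))) :=
    Real.exp_le_exp.mpr (by linarith)
  exact mul_le_mul (mul_le_mul_of_nonneg_left hfactor (by positivity)) hexp (by positivity)
    (mul_nonneg (by positivity) (Real.rpow_nonneg (mul_pos hb hC₂.det_pos).le _))

theorem lemma_3_2_nonneg_general (d : ℕ) (V S Φ : Matrix (Fin d) (Fin d) ℝ)
    (hV : V.PosDef) (hΦ : Φ.PosSemidef)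
    (hSΦ : (S - Φ).PosSemidef) (y μ : Fin d → ℝ) :
    ((2 : ℝ) ^ d * Real.pi ^ ((d : ℝ) / 2) * (V + S - Φ).det ^ ((1 : ℝ) / 2))⁻¹ *
        fN d ((1 / 2 : ℝ) • (V + S + Φ)) μ y ≤
      ((2 : ℝ) ^ d * Real.pi ^ ((d : ℝ) / 2) * V.det ^ ((1 : ℝ) / 2))⁻¹ *
        fN d ((1 / 2 : ℝ) • V + S) μ y := by
  have hP : (V + S - Φ).PosDef := by simpa [add_sub_assoc] using hV.add_posSemidef hSΦ
  have hQ : (V + S + Φ).PosDef := by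
    convert hP.add_posSemidef (hΦ.add hΦ) using 1
    abel
  have hdet : V.det * (V + S + S).det ≤ (V + S - Φ).det * (V + S + Φ).det := by
    convert hP.det_sub_mul_det_add_le (Q := V + S + Φ) (by convert hΦ.add hΦ using 1; abel) hSΦ
      (by convert hV.posSemidef using 1; abel) using 3 <;> abel
  have hdet_half : ∀ X : Matrix (Fin d) (Fin d) ℝ,
      ((1 / 2 : ℝ) • X).det = (1 / 2) ^ d * X.det := by
    simp
  have hsplit : ∀ c : ℝ, ((2 : ℝ) ^ d * Real.pi ^ ((d : ℝ) / 2) * c)⁻¹ =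
      ((2 : ℝ) ^ d * Real.pi ^ ((d : ℝ) / 2))⁻¹ * c⁻¹ := fun c => mul_inv _ _
  rw [hsplit, hsplit, mul_assoc, mul_assoc]
  gcongr _ * ?_
  refine inv_rpow_half_mul_fN_le (hQ.smul (a := (1 / 2 : ℝ)) (by norm_num)) ?_ hP.det_pos
    hV.det_pos ?_ μ y
  · convert hSΦ.smul (a := (1 / 2 : ℝ)) (by norm_num) using 1
    module
  · rw [show (1 / 2 : ℝ) • V + S = (1 / 2 : ℝ) • (V + S + S) by module, hdet_half, hdet_half]
    calc V.det * ((1 / 2) ^ d * (V + S + S).det)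
        = (1 / 2) ^ d * (V.det * (V + S + S).det) := by ring
      _ ≤ (1 / 2) ^ d * ((V + S - Φ).det * (V + S + Φ).det) := by gcongr
      _ = (V + S - Φ).det * ((1 / 2) ^ d * (V + S + Φ).det) := by ring

/-- Nonnegativity of the expected look-ahead variance of Lemma 3.2: the second term
never exceeds the first. -/
theorem lemma_3_2_nonneg (d : ℕ) (V S Φ : Matrix (Fin d) (Fin d) ℝ)
    (hV : V.PosDef) (hS : S.PosDef) (hΦsymm : Φ.IsSymm) (hΦ : Φ.PosSemidef)
    (hSΦ : (S - Φ).PosSemidef) (y μ : Fin d → ℝ) :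
    ((2 : ℝ) ^ d * Real.pi ^ ((d : ℝ) / 2) * (V + S - Φ).det ^ ((1 : ℝ) / 2))⁻¹ *
        fN d ((1 / 2 : ℝ) • (V + S + Φ)) μ y ≤
      ((2 : ℝ) ^ d * Real.pi ^ ((d : ℝ) / 2) * V.det ^ ((1 : ℝ) / 2))⁻¹ *
        fN d ((1 / 2 : ℝ) • V + S) μ y :=
  lemma_3_2_nonneg_general d V S Φ hV hΦ hSΦ y μ
end
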